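/- arXiv:2311.14238 — 2 statements merged into one kernel-verified Lean document; each statement's English description precedes it below -/
import Mathlib

section
/- Let A be a unital commutative C*-algebra C(X) for a compact Hausdorff space X. Then A has real rank zero (the invertible self-adjoint elements are dense in the self-adjoint part) if and only if X is totally disconnected (covering dimension zero). -/
/-!
If `X` has two points `x ≠ y` in a common preconnected set, a function that is negative at `x`
and positive at `y` cannot be approximated by nonvanishing functions, by the intermediate value
theorem. Conversely, if `X` is totally disconnected, the zero set of `f` lies in a clopen set `C`
on which `|f| < ε / 2`, and adding `ε / 2` times the indicator of `C` to `f` removes its zeros.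
-/

open Set

section

variable {X : Type*} [TopologicalSpace X]

theorem exists_continuousMap_neg_pos [T35Space X] {x y : X} (hxy : x ≠ y) :
    ∃ f : C(X, ℝ), f x < 0 ∧ 0 < f y := by
  obtain ⟨f, hf, hfx, hfy⟩ :=
    CompletelyRegularSpace.completely_regular x {y} isClosed_singleton hxy
  refine ⟨⟨fun z => (f z : ℝ) - 1 / 2, (continuous_subtype_val.comp hf).sub continuous_const⟩,
    ?_, ?_⟩
  · simp [hfx]
  · norm_num [hfy rfl]

theorem totallyDisconnectedSpace_of_dense_setOf_ne_zero [T35Space X]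
    (hdense : Dense {f : C(X, ℝ) | ∀ x, f x ≠ 0}) : TotallyDisconnectedSpace X := by
  refine ⟨fun s _ hs x hx y hy => by_contra fun hxy => ?_⟩
  obtain ⟨f, hfx, hfy⟩ := exists_continuousMap_neg_pos hxy
  have hopen : IsOpen ({g : C(X, ℝ) | g x < 0} ∩ {g | 0 < g y}) :=
    (isOpen_lt (continuous_eval_const x) continuous_const).inter
      (isOpen_lt continuous_const (continuous_eval_const y))
  obtain ⟨g, hg, hgx, hgy⟩ := hdense.exists_mem_open hopen ⟨f, hfx, hfy⟩
  obtain ⟨z, -, hz⟩ :=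
    hs.intermediate_value hx hy g.continuous.continuousOn ⟨hgx.le, hgy.le⟩
  exact hg z hz

theorem dense_setOf_ne_zero [CompactSpace X] [T2Space X] [TotallyDisconnectedSpace X] :
    Dense {f : C(X, ℝ) | ∀ x, f x ≠ 0} := by
  refine Metric.dense_iff.2 fun f ε hε => ?_
  have hε2 : 0 < ε / 2 := half_pos hε
  obtain ⟨C, hC, hzero, hsmall⟩ := exists_clopen_of_closed_subset_open
    (isClosed_singleton.preimage f.continuous)
    (isOpen_lt f.continuous.abs continuous_const : IsOpen {x | |f x| < ε / 2})
    (fun x (hx : f x = 0) => by simpa [hx] using hε2)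
  set g : C(X, ℝ) := f + (ε / 2) • (LocallyConstant.charFn ℝ hC : C(X, ℝ))
  have hg : ∀ x, g x = f x + (ε / 2) * C.indicator 1 x := fun x => rfl
  refine ⟨g, ?_, fun x => ?_⟩
  · refine Metric.mem_ball.2 (lt_of_le_of_lt ((ContinuousMap.dist_le hε2.le).2 fun x => ?_)
      (half_lt_self hε))
    by_cases hx : x ∈ C <;> simp [hg, hx, abs_of_pos hε, hε2.le]
  · by_cases hx : x ∈ C
    · have hfx : |f x| < ε / 2 := hsmall hx
      rw [hg, indicator_of_mem hx, Pi.one_apply, mul_one]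
      exact (by linarith [neg_abs_le (f x)] : 0 < f x + ε / 2).ne'
    · rw [hg, indicator_of_notMem hx, mul_zero, add_zero]
      exact fun h => hx (hzero h)

end

theorem stmt_0 (X : Type*) [TopologicalSpace X] [CompactSpace X] [T2Space X] :
    Dense {f : C(X, ℝ) | ∀ x : X, f x ≠ 0} ↔ TotallyDisconnectedSpace X :=
  ⟨totallyDisconnectedSpace_of_dense_setOf_ne_zero, fun _ => dense_setOf_ne_zero⟩
end

section
/- Let A be a C*-algebra with a faithful tracial state τ, let a, b be positive elements of A, and suppose a ≲ b (Cuntz subequivalent). Then d_τ(a) ≤ d_τ(b), where d_τ(x) = lim_{ε→0} τ(f_ε(x)). -/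
/-- Cuntz subequivalence. -/
def CuntzSub' {A : Type*} [CStarAlgebra A] (a b : A) : Prop :=
  ∃ x : ℕ → A,
    Filter.Tendsto (fun n => star (x n) * x n) Filter.atTop (nhds a) ∧
      ∀ n, x n * star (x n) ∈ closure {z : A | ∃ y : A, z = b * y * b}

/-!
Fix `n` and write `f` for the cutoff `f_ε` with `ε = 2⁻ⁿ`. Since `x_k* x_k → a`, continuity of the
functional calculus gives `τ (f a) = lim τ (f (x_k* x_k))`, and the trace property, passed from
polynomials to `f` by Weierstrass approximation, gives `τ (f (x_k* x_k)) = τ (f (x_k x_k*))`.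
Because `f 0 = 0`, the element `e = f (x_k x_k*)` lies in the closure of `b A b`, and `e ≤ 1`.
The elements `g_m = f_{2⁻ᵐ} b` satisfy `g_m b → b`, so `g_m e g_m → e`, while
`g_m e g_m ≤ g_m² ≤ g_m`; hence `τ e ≤ sup_m τ g_m = d_τ b`.
-/

open Filter Topology Polynomial Set

noncomputable def cutoff (ε : ℝ) (t : ℝ) : ℝ := min 1 (max 0 ((2 * t - ε) / ε))

namespace cutoff

lemma continuous (ε : ℝ) : Continuous (cutoff ε) := by
  unfold cutoff; fun_prop

lemma nonneg (ε t : ℝ) : 0 ≤ cutoff ε t := le_min zero_le_one (le_max_left _ _)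

lemma le_one (ε t : ℝ) : cutoff ε t ≤ 1 := min_le_left _ _

lemma apply_zero {ε : ℝ} (hε : 0 < ε) : cutoff ε 0 = 0 := by
  simp [cutoff, hε.ne']

lemma mul_self_le (ε t : ℝ) : cutoff ε t * cutoff ε t ≤ cutoff ε t :=
  mul_le_of_le_one_left (nonneg ε t) (le_one ε t)

lemma eq_one {ε t : ℝ} (hε : 0 < ε) (ht : ε ≤ t) : cutoff ε t = 1 :=
  min_eq_left <| le_max_of_le_right <| by rw [le_div_iff₀ hε]; linarith

lemma abs_mul_sub_le {ε t : ℝ} (hε : 0 < ε) (ht : 0 ≤ t) : |cutoff ε t * t - t| ≤ ε := by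
  rcases le_or_gt ε t with h | h
  · simpa [eq_one hε h] using hε.le
  · have := nonneg ε t
    have := le_one ε t
    rw [abs_le]
    constructor <;> nlinarith

end cutoff

lemma exists_seq_polynomial_tendstoUniformlyOn {a b : ℝ} {f : ℝ → ℝ}
    (hf : ContinuousOn f (Icc a b)) :
    ∃ p : ℕ → ℝ[X], TendstoUniformlyOn (fun n t ↦ (p n).eval t) f atTop (Icc a b) := by
  choose p hp using fun n : ℕ ↦
    exists_polynomial_near_of_continuousOn a b f hf (1 / (n + 1)) Nat.one_div_pos_of_nat
  refine ⟨p, Metric.tendstoUniformlyOn_iff.2 fun ε hε ↦ ?_⟩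
  obtain ⟨N, hN⟩ := exists_nat_one_div_lt hε
  filter_upwards [eventually_ge_atTop N] with n hn t ht
  rw [dist_comm, Real.dist_eq]
  calc |(p n).eval t - f t| < 1 / (n + 1) := hp n t ht
    _ ≤ 1 / (N + 1) := by gcongr
    _ < ε := hN

section

variable {A : Type*} [CStarAlgebra A]

lemma map_pow_mul_comm (τ : A →L[ℂ] ℂ) (htr : ∀ x y : A, τ (x * y) = τ (y * x))
    (u v : A) : ∀ n : ℕ, τ ((u * v) ^ n) = τ ((v * u) ^ n)
  | 0 => by simp
  | n + 1 => by rw [pow_succ, ← mul_assoc, htr, mul_pow_mul, ← mul_assoc, ← pow_succ']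

lemma map_cfc_eq_of_map_pow_eq (τ : A →L[ℂ] ℂ) {c c' : A} (hc : IsSelfAdjoint c)
    (hc' : IsSelfAdjoint c') (hpow : ∀ n : ℕ, τ (c ^ n) = τ (c' ^ n)) {f : ℝ → ℝ}
    (hf : Continuous f) : τ (cfc f c) = τ (cfc f c') := by
  have hK := (spectrum.isCompact (𝕜 := ℝ) c).union (spectrum.isCompact (𝕜 := ℝ) c')
  obtain ⟨lo, hlo⟩ := hK.bddBelow
  obtain ⟨hi, hhi⟩ := hK.bddAbove
  have hsub : spectrum ℝ c ∪ spectrum ℝ c' ⊆ Icc lo hi := fun t ht ↦ ⟨hlo ht, hhi ht⟩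
  obtain ⟨p, hp⟩ := exists_seq_polynomial_tendstoUniformlyOn (a := lo) (b := hi) hf.continuousOn
  have tendsto_map_aeval {d : A} (hd : IsSelfAdjoint d) (hds : spectrum ℝ d ⊆ Icc lo hi) :
      Tendsto (fun n ↦ τ (aeval d (p n))) atTop (𝓝 (τ (cfc f d))) := by
    have := tendsto_cfc_fun (a := d) (hp.mono hds)
      (Eventually.of_forall fun n ↦ (p n).continuous.continuousOn)
    simp only [cfc_polynomial _ d hd] at this
    exact (τ.continuous.tendsto _).comp this
  have heq : ∀ n, τ (aeval c (p n)) = τ (aeval c' (p n)) := fun n ↦ by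
    simp only [aeval_eq_sum_range, map_sum, τ.map_smul_of_tower, hpow]
  exact tendsto_nhds_unique (tendsto_map_aeval hc (subset_union_left.trans hsub))
    (by simpa only [heq] using tendsto_map_aeval hc' (subset_union_right.trans hsub))

lemma map_cfc_star_mul_self_eq (τ : A →L[ℂ] ℂ) (htr : ∀ x y : A, τ (x * y) = τ (y * x))
    (x : A) {f : ℝ → ℝ} (hf : Continuous f) :
    τ (cfc f (star x * x)) = τ (cfc f (x * star x)) :=
  map_cfc_eq_of_map_pow_eq τ (.star_mul_self x) (.mul_star_self x)
    (map_pow_mul_comm τ htr _ _) hf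

/-- The subalgebra `b A b`; its closure is the hereditary subalgebra generated by `b`. -/
def IsSelfAdjoint.sandwichSubalgebra {b : A} (hb : IsSelfAdjoint b) :
    NonUnitalStarSubalgebra ℂ A where
  carrier := {z | ∃ y, z = b * y * b}
  add_mem' := by rintro _ _ ⟨u, rfl⟩ ⟨v, rfl⟩; exact ⟨u + v, by noncomm_ring⟩
  zero_mem' := ⟨0, by simp⟩
  mul_mem' := by rintro _ _ ⟨u, rfl⟩ ⟨v, rfl⟩; exact ⟨u * (b * b) * v, by noncomm_ring⟩
  smul_mem' := by rintro r _ ⟨u, rfl⟩; exact ⟨r • u, by simp⟩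
  star_mem' := by
    rintro _ ⟨u, rfl⟩; exact ⟨star u, by simp [star_mul, hb.star_eq, mul_assoc]⟩

lemma cfc_mem_closure_sandwich {b c : A} (hb : IsSelfAdjoint b)
    (hc : c ∈ closure {z | ∃ y, z = b * y * b}) {f : ℝ → ℝ} (hf : Continuous f)
    (hf0 : f 0 = 0) : cfc f c ∈ closure {z | ∃ y, z = b * y * b} := by
  let S := hb.sandwichSubalgebra.topologicalClosure
  have : IsClosed (S : Set A) := hb.sandwichSubalgebra.isClosed_topologicalClosure
  rw [← cfcₙ_eq_cfc hf.continuousOn hf0]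
  exact cfcₙ_mem (𝕜 := ℝ) (𝕜' := ℂ) (s := S) f hc

end

lemma Filter.Tendsto.cfc_of_continuous {X A : Type*} [CStarAlgebra A] {l : Filter X}
    {c : X → A} {a : A} (h : Tendsto c l (𝓝 a)) (hc : ∀ᶠ k in l, IsSelfAdjoint (c k))
    (ha : IsSelfAdjoint a) {f : ℝ → ℝ} (hf : Continuous f) :
    Tendsto (fun k ↦ cfc f (c k)) l (𝓝 (cfc f a)) := by
  have hcont : ContinuousOn (cfc f) {d : A | IsSelfAdjoint d} :=
    ContinuousOn.cfc_of_mem_nhdsSet f (s := univ) univ_mem continuousOn_id (fun _ hd ↦ hd)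
      hf.continuousOn
  exact ((hcont a ha).tendsto).comp (tendsto_nhdsWithin_iff.2 ⟨h, hc⟩)

lemma tendsto_mul_mul_of_mem_closure {R X : Type*} [NormedRing R] {l : Filter X} {g : X → R}
    {b e : R} (hg : ∀ n, ‖g n‖ ≤ 1) (hgb : Tendsto (fun n ↦ g n * b) l (𝓝 b))
    (hbg : Tendsto (fun n ↦ b * g n) l (𝓝 b)) (he : e ∈ closure {z | ∃ y, z = b * y * b}) :
    Tendsto (fun n ↦ g n * e * g n) l (𝓝 e) := by
  refine Metric.tendsto_nhds.2 fun ε hε ↦ ?_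
  obtain ⟨_, ⟨y, rfl⟩, hez⟩ := Metric.mem_closure_iff.1 he (ε / 3) (by positivity)
  have hz : Tendsto (fun n ↦ g n * (b * y * b) * g n) l (𝓝 (b * y * b)) := by
    simpa only [mul_assoc] using hgb.mul ((tendsto_const_nhds (x := y)).mul hbg)
  filter_upwards [Metric.tendsto_nhds.1 hz (ε / 3) (by positivity)] with n hn
  have hconj : ‖g n * (e - b * y * b) * g n‖ ≤ ‖e - b * y * b‖ :=
    calc ‖g n * (e - b * y * b) * g n‖ ≤ ‖g n‖ * ‖e - b * y * b‖ * ‖g n‖ := norm_mul₃_le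
      _ ≤ 1 * ‖e - b * y * b‖ * 1 := by gcongr <;> exact hg n
      _ = ‖e - b * y * b‖ := by ring
  rw [dist_eq_norm] at hez hn ⊢
  calc ‖g n * e * g n - e‖
      = ‖g n * (e - b * y * b) * g n + (g n * (b * y * b) * g n - b * y * b)
          + (b * y * b - e)‖ := by congr 1; noncomm_ring
    _ ≤ ‖g n * (e - b * y * b) * g n‖ + ‖g n * (b * y * b) * g n - b * y * b‖
          + ‖b * y * b - e‖ := norm_add₃_le
    _ < ε := by rw [norm_sub_rev (b * y * b)]; linarith

section

variable {A : Type*} [CStarAlgebra A] [PartialOrder A] [StarOrderedRing A]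

lemma re_map_mono (τ : A →L[ℂ] ℂ)
    (hpos : ∀ x : A, ∃ r : ℝ, 0 ≤ r ∧ τ (star x * x) = (r : ℂ)) {x y : A} (hxy : x ≤ y) :
    (τ x).re ≤ (τ y).re := by
  obtain ⟨z, hz⟩ := CStarAlgebra.nonneg_iff_eq_star_mul_self.mp (sub_nonneg.2 hxy)
  obtain ⟨r, hr, hτz⟩ := hpos z
  have : (τ y).re - (τ x).re = r := by
    rw [← Complex.sub_re, ← map_sub, hz, hτz, Complex.ofReal_re]
  linarith
lemma norm_cfc_cutoff_mul_sub_le {b : A} (hb : 0 ≤ b) {ε : ℝ} (hε : 0 < ε) :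
    ‖cfc (cutoff ε) b * b - b‖ ≤ ε := by
  have hcont := (cutoff.continuous ε).continuousOn (s := spectrum ℝ b)
  nth_rw 2 3 [← cfc_id' ℝ b]
  rw [← cfc_mul .., ← cfc_sub ..]
  exact norm_cfc_le hε.le fun t ht ↦ cutoff.abs_mul_sub_le hε (spectrum_nonneg_of_nonneg hb ht)

lemma tendsto_cfc_cutoff_mul {b : A} (hb : 0 ≤ b) :
    Tendsto (fun m : ℕ ↦ cfc (cutoff (1 / 2 ^ m)) b * b) atTop (𝓝 b) := by
  have h2 : Tendsto (fun m : ℕ ↦ (1 / 2 ^ m : ℝ)) atTop (𝓝 0) := by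
    simpa only [one_div_pow] using
      tendsto_pow_atTop_nhds_zero_of_lt_one (r := (1 / 2 : ℝ)) (by norm_num) (by norm_num)
  refine tendsto_iff_norm_sub_tendsto_zero.2 (squeeze_zero (fun _ ↦ norm_nonneg _) ?_ h2)
  exact fun m ↦ norm_cfc_cutoff_mul_sub_le hb (by positivity)

lemma re_map_le_iSup_cutoff (τ : A →L[ℂ] ℂ)
    (hpos : ∀ x : A, ∃ r : ℝ, 0 ≤ r ∧ τ (star x * x) = (r : ℂ)) {b e : A} (hb : 0 ≤ b)
    (he1 : e ≤ 1) (he : e ∈ closure {z | ∃ y, z = b * y * b}) :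
    (τ e).re ≤ ⨆ m : ℕ, (τ (cfc (cutoff (1 / 2 ^ m)) b)).re := by
  set g : ℕ → A := fun m ↦ cfc (cutoff (1 / 2 ^ m)) b
  have hg_sa (m : ℕ) : IsSelfAdjoint (g m) := cfc_predicate _ _
  have hg_norm (m : ℕ) : ‖g m‖ ≤ 1 := norm_cfc_le zero_le_one fun t _ ↦ by
    rw [Real.norm_of_nonneg (cutoff.nonneg _ t)]; exact cutoff.le_one _ t
  have hbdd : BddAbove (range fun m ↦ (τ (g m)).re) := by
    refine ⟨‖τ‖, forall_mem_range.2 fun m ↦ ?_⟩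
    calc (τ (g m)).re ≤ ‖τ (g m)‖ := Complex.re_le_norm _
      _ ≤ ‖τ‖ * ‖g m‖ := τ.le_opNorm _
      _ ≤ ‖τ‖ := mul_le_of_le_one_right (norm_nonneg _) (hg_norm m)
  have hconj (m : ℕ) : g m * e * g m ≤ g m := by
    have hsq : g m * g m ≤ g m := by
      have hc := (cutoff.continuous (1 / 2 ^ m)).continuousOn (s := spectrum ℝ b)
      rw [← cfc_mul _ _ b hc hc]
      exact cfc_mono (fun t _ ↦ cutoff.mul_self_le _ t) (hc.mul hc) hc
    have := star_left_conjugate_le_conjugate he1 (g m)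
    rw [(hg_sa m).star_eq, mul_one] at this
    exact this.trans hsq
  have hgb := tendsto_cfc_cutoff_mul hb
  have hbg : Tendsto (fun m ↦ b * g m) atTop (𝓝 b) := by
    have := hgb.star.congr fun m ↦
      (by rw [star_mul, (hg_sa m).star_eq, hb.isSelfAdjoint.star_eq] : star (g m * b) = b * g m)
    rwa [hb.isSelfAdjoint.star_eq] at this
  have htend := ((Complex.continuous_re.comp τ.continuous).tendsto _).comp
    (tendsto_mul_mul_of_mem_closure hg_norm hgb hbg he)
  exact le_of_tendsto htend (Eventually.of_forall fun m ↦
    (re_map_mono τ hpos (hconj m)).trans (le_ciSup hbdd m))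

end

theorem stmt_13_general (A : Type*) [CStarAlgebra A] [PartialOrder A] [StarOrderedRing A]
    (τ : A →L[ℂ] ℂ)
    (hpos : ∀ x : A, ∃ r : ℝ, 0 ≤ r ∧ τ (star x * x) = (r : ℂ))
    (htr : ∀ x y : A, τ (x * y) = τ (y * x))
    (a b : A) (ha : 0 ≤ a) (hb : 0 ≤ b) (hab : CuntzSub' a b) :
    let d : A → ℝ := fun x => ⨆ n : ℕ,
      (τ (cfc (fun t : ℝ =>
        min 1 (max 0 ((2 * t - 1 / 2 ^ n) / (1 / 2 ^ n)))) x)).re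
    d a ≤ d b := by
  intro d
  obtain ⟨x, hx_lim, hx_mem⟩ := hab
  refine ciSup_le fun n ↦ ?_
  have hf := cutoff.continuous (1 / 2 ^ n)
  have hlim := ((Complex.continuous_re.comp τ.continuous).tendsto _).comp
    (hx_lim.cfc_of_continuous (.of_forall fun k ↦ .star_mul_self (x k)) ha.isSelfAdjoint hf)
  refine le_of_tendsto' hlim fun k ↦ ?_
  simp only [Function.comp_apply, map_cfc_star_mul_self_eq τ htr (x k) hf]
  exact re_map_le_iSup_cutoff τ hpos hb (cfc_le_one _ _ fun t _ ↦ cutoff.le_one _ t)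
    (cfc_mem_closure_sandwich hb.isSelfAdjoint (hx_mem k) hf (cutoff.apply_zero (by positivity)))

theorem stmt_13 (A : Type*) [CStarAlgebra A] [PartialOrder A] [StarOrderedRing A]
    (τ : A →L[ℂ] ℂ) (hτ1 : τ 1 = 1)
    (hpos : ∀ x : A, ∃ r : ℝ, 0 ≤ r ∧ τ (star x * x) = (r : ℂ))
    (htr : ∀ x y : A, τ (x * y) = τ (y * x))
    (hfaith : ∀ x : A, τ (star x * x) = 0 → x = 0)
    (a b : A) (ha : 0 ≤ a) (hb : 0 ≤ b) (hab : CuntzSub' a b) :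
    let d : A → ℝ := fun x => ⨆ n : ℕ,
      (τ (cfc (fun t : ℝ =>
        min 1 (max 0 ((2 * t - 1 / 2 ^ n) / (1 / 2 ^ n)))) x)).re
    d a ≤ d b :=
  stmt_13_general A τ hpos htr a b ha hb hab
end
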